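/- Let p be a prime, let k ≥ 2 be an integer, and let c ≥ 1 be an integer with p ∤ c. Set Q = (1+X)^c − 1, regarded as an element of ℤ_p[[X]]. Then X^{k−1}·Q^{k−1} divides c^{k−1}·X^{k−1}·h_{k−2}(Q) − Q^{k−1}·h_{k−2}(X) in ℤ_p[[X]]. (This expresses that (χ(γ)^{k−1}γ − 1)(π^{1−k} h_{k−2}(π)) lies in A⁺_{ℚ_p} = ℤ_p[[π]] for γ ∈ Γ with χ(γ) = c, where γ acts by π ↦ (1+π)^{χ(γ)} − 1.) -/

import Mathlib

/-!
Write `f_j = h_j(X) / X ^ (j + 1)` and `∂ = (1 + X) d/dX`. The recursion for `h_j` says exactly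
`f_{j+1} = -∂ f_j`, and `Q = (1 + X) ^ c - 1` satisfies `∂ Q = c (1 + Q)`, so
`∂ (F ∘ Q) = c • (∂ F) ∘ Q`. Hence `c ^ (j + 1) f_j(Q) - f_j(X) = (-∂) ^ j (c / Q - 1 / X)`.
Here `c / Q - 1 / X` is integral because `Q / X` is a unit with constant term `c`, and `∂`
preserves integrality. The argument is run on numerators, over the ring of power series.
-/

open Polynomial (aeval)
open PowerSeries

/-- The polynomials `h_j`, defined by `h_0 = 1` and
`h_j = (1+X) * (j * h_{j-1} - X * h_{j-1}')`. -/
noncomputable def hPoly : ℕ → Polynomial ℤ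
  | 0 => 1
  | (j + 1) => (1 + Polynomial.X) *
      ((j + 1 : ℤ) • hPoly j - Polynomial.X * Polynomial.derivative (hPoly j))

theorem aeval_hPoly_succ {A : Type*} [CommRing A] (x : A) (j : ℕ) :
    aeval x (hPoly (j + 1)) =
      (1 + x) * ((j + 1) * aeval x (hPoly j) - x * aeval x (Polynomial.derivative (hPoly j))) := by
  simp only [hPoly, map_mul, map_sub, map_add, map_one, Polynomial.aeval_X, zsmul_eq_mul,
    map_intCast]
  push_cast
  ring

/-- The numerator of `g ^ (j + 1) * h_j(y) / y ^ (j + 1) - h_j(x) / x ^ (j + 1)`. -/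
noncomputable def hPolyDiffNum {A : Type*} [CommRing A] (g x y : A) (j : ℕ) : A :=
  g ^ (j + 1) * x ^ (j + 1) * aeval y (hPoly j) - y ^ (j + 1) * aeval x (hPoly j)

namespace Derivation

variable {R A : Type*} [CommRing R] [CommRing A] [Algebra R A] (D : Derivation R A A)

theorem map_aeval_int (x : A) (f : Polynomial ℤ) :
    D (aeval x f) = aeval x (Polynomial.derivative f) * D x := by
  have h := (D.restrictScalars ℤ).map_aeval f x
  rwa [restrictScalars_apply, restrictScalars_apply, smul_eq_mul] at h

-- `x * D u - n * D x * u` is the numerator of `D (u / x ^ n)`.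
theorem mul_map_pow_mul_sub (x a : A) (n : ℕ) :
    x * D (x ^ n * a) - n * D x * (x ^ n * a) = x ^ (n + 1) * D a := by
  rw [D.leibniz, D.leibniz_pow]
  cases n <;> simp only [smul_eq_mul, nsmul_eq_mul] <;> push_cast <;> ring

theorem mul_map_aeval_hPoly_sub {x g : A} (hx : D x = g * (1 + x)) (j : ℕ) :
    x * D (aeval x (hPoly j)) - (j + 1) * D x * aeval x (hPoly j) =
      -(g * aeval x (hPoly (j + 1))) := by
  rw [map_aeval_int, hx, aeval_hPoly_succ]
  ring

theorem mul_map_hPolyDiffNum_sub {g x y : A} (hg : D g = 0) (hx : D x = 1 + x)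
    (hy : D y = g * (1 + y)) (j : ℕ) :
    x * y * D (hPolyDiffNum g x y j) - (j + 1) * D (x * y) * hPolyDiffNum g x y j =
      -hPolyDiffNum g x y (j + 1) := by
  have stepX := D.mul_map_aeval_hPoly_sub (x := x) (g := 1) (by rw [hx, one_mul]) j
  have stepY := D.mul_map_aeval_hPoly_sub hy j
  simp only [hPolyDiffNum, map_sub, D.leibniz, D.leibniz_pow, hg, smul_eq_mul, nsmul_eq_mul,
    Nat.add_sub_cancel] at stepX stepY ⊢
  push_cast at stepX stepY ⊢
  linear_combination g ^ (j + 1) * x ^ (j + 2) * stepY - y ^ (j + 2) * stepX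

theorem mul_pow_dvd_hPolyDiffNum {g x y : A} (hg : D g = 0) (hx : D x = 1 + x)
    (hy : D y = g * (1 + y)) (hxy : x * y ∣ g * x - y) (j : ℕ) :
    (x * y) ^ (j + 1) ∣ hPolyDiffNum g x y j := by
  induction j with
  | zero => simpa [hPolyDiffNum, hPoly] using hxy
  | succ j ih =>
    obtain ⟨a, ha⟩ := ih
    have hstep := D.mul_map_hPolyDiffNum_sub hg hx hy j
    have hpow := D.mul_map_pow_mul_sub (x * y) a (j + 1)
    rw [← ha] at hpow
    push_cast at hpow
    exact ⟨-D a, by linear_combination hstep - hpow⟩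

end Derivation

namespace PowerSeries

variable (R : Type*) [CommRing R]

/-- The invariant derivation `(1 + X) d/dX` of the multiplicative formal group. -/
noncomputable def invariantDerivation : Derivation R R⟦X⟧ R⟦X⟧ :=
  (1 + X : R⟦X⟧) • derivative R

variable {R}

theorem invariantDerivation_X : invariantDerivation R X = 1 + X := by
  simp [invariantDerivation]

theorem invariantDerivation_one_add_X_pow_sub_one (c : ℕ) :
    invariantDerivation R ((1 + X) ^ c - 1) = (c : R⟦X⟧) * (1 + ((1 + X) ^ c - 1)) := by
  simp only [invariantDerivation, Derivation.smul_apply, map_sub, Derivation.leibniz_pow,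
    Derivation.map_one_eq_zero, map_add, derivative_X, smul_eq_mul, nsmul_eq_mul]
  cases c <;> simp only [add_sub_cancel] <;> push_cast <;> ring

theorem X_mul_dvd_natCast_mul_X_sub {c : ℕ} (hc : IsUnit (c : R)) :
    X * ((1 + X) ^ c - 1) ∣ (c : R⟦X⟧) * X - ((1 + X) ^ c - 1) := by
  set U : R⟦X⟧ := ∑ i ∈ Finset.range c, (X + 1) ^ i
  have hQ : (1 + X : R⟦X⟧) ^ c - 1 = X * U := by
    rw [add_comm (1 : R⟦X⟧) X, ← geom_sum_mul_add X c]
    ring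
  have hU0 : constantCoeff U = c := by simp [U]
  have hU : IsUnit U := isUnit_iff_constantCoeff.mpr (hU0 ▸ hc)
  rw [hQ, mul_comm (c : R⟦X⟧), ← mul_sub]
  refine mul_dvd_mul_left X ((hU.mul_right_dvd).2 ?_)
  rw [X_dvd_iff, map_sub, hU0, map_natCast, sub_self]

theorem X_pow_mul_pow_dvd_hPolyDiffNum {c : ℕ} (hc : IsUnit (c : R)) (j : ℕ) :
    X ^ (j + 1) * ((1 + X) ^ c - 1) ^ (j + 1) ∣ hPolyDiffNum (c : R⟦X⟧) X ((1 + X) ^ c - 1) j := by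
  rw [← mul_pow]
  exact (invariantDerivation R).mul_pow_dvd_hPolyDiffNum (Derivation.map_natCast _ c)
    invariantDerivation_X (invariantDerivation_one_add_X_pow_sub_one c)
    (X_mul_dvd_natCast_mul_X_sub hc) j

end PowerSeries

theorem gamma_action_integral_general (p : ℕ) [Fact p.Prime] (k : ℕ)
    (c : ℕ) (hpc : ¬ (p ∣ c)) :
    (PowerSeries.X : PowerSeries ℤ_[p]) ^ (k - 1) *
        ((1 + PowerSeries.X : PowerSeries ℤ_[p]) ^ c - 1) ^ (k - 1) ∣
      (c : PowerSeries ℤ_[p]) ^ (k - 1) * (PowerSeries.X : PowerSeries ℤ_[p]) ^ (k - 1) *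
          Polynomial.aeval ((1 + PowerSeries.X : PowerSeries ℤ_[p]) ^ c - 1) (hPoly (k - 2)) -
        ((1 + PowerSeries.X : PowerSeries ℤ_[p]) ^ c - 1) ^ (k - 1) *
          Polynomial.aeval (PowerSeries.X : PowerSeries ℤ_[p]) (hPoly (k - 2)) := by
  have hc : IsUnit (c : ℤ_[p]) := by
    rw [PadicInt.isUnit_iff, PadicInt.norm_natCast_eq_one_iff]
    exact (Nat.Prime.coprime_iff_not_dvd Fact.out).2 hpc
  obtain hk | ⟨j, rfl⟩ : k ≤ 1 ∨ ∃ j, k = j + 2 := by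
    rcases k with _ | _ | j <;> simp
  · simp [Nat.sub_eq_zero_of_le hk]
  · rw [show j + 2 - 1 = j + 1 by omega, show j + 2 - 2 = j by omega]
    have := X_pow_mul_pow_dvd_hPolyDiffNum hc j
    -- The statement's `aeval` uses the `ℤ`-algebra structure of power series, not `Ring.toIntAlgebra`.
    simpa only [hPolyDiffNum, Polynomial.aeval_def, RingHom.eq_intCast' (algebraMap ℤ ℤ_[p]⟦X⟧),
      algebraMap_int_eq] using this

/-- With `Q = (1+X)^c - 1 ∈ ℤ_p[[X]]` (for `c ≥ 1` prime to `p`),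
`X^{k-1} Q^{k-1}` divides `c^{k-1} X^{k-1} h_{k-2}(Q) - Q^{k-1} h_{k-2}(X)`;
this expresses that `(χ(γ)^{k-1} γ - 1)(π^{1-k} h_{k-2}(π)) ∈ ℤ_p[[π]]`. -/
theorem gamma_action_integral (p : ℕ) [Fact p.Prime] (k : ℕ) (hk : 2 ≤ k)
    (c : ℕ) (hc : 1 ≤ c) (hpc : ¬ (p ∣ c)) :
    (PowerSeries.X : PowerSeries ℤ_[p]) ^ (k - 1) *
        ((1 + PowerSeries.X : PowerSeries ℤ_[p]) ^ c - 1) ^ (k - 1) ∣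
      (c : PowerSeries ℤ_[p]) ^ (k - 1) * (PowerSeries.X : PowerSeries ℤ_[p]) ^ (k - 1) *
          Polynomial.aeval ((1 + PowerSeries.X : PowerSeries ℤ_[p]) ^ c - 1) (hPoly (k - 2)) -
        ((1 + PowerSeries.X : PowerSeries ℤ_[p]) ^ c - 1) ^ (k - 1) *
          Polynomial.aeval (PowerSeries.X : PowerSeries ℤ_[p]) (hPoly (k - 2)) :=
  gamma_action_integral_general p k c hpc
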